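/- arXiv:2009.05937 — 3 statements merged into one kernel-verified Lean document; each statement's English description precedes it below -/
import Mathlib

section
/- Let q = 2^m and let f : F_{q²} → F_{q²} be given by f(x) = x^{3q} + a₁x^{2q+1} + a₂x^{q+2} + a₃x³ where a₁ ∈ F_q, a₂ ∈ F_{q²}*, a₃ ∈ F_{q²}. If a₁/a₂ ∉ U and a₁/a₂ ≠ a₃^q, then f is affine equivalent to a function h(x) = x^{3q} + a₁'x^{2q+1} + a₃'x³ where a₁' ∈ F_q and a₃' ∈ F_{q²}. -/
/-- `f` is almost perfect nonlinear (APN): for every `a ≠ 0` and every `b`, the equation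
`f (x + a) + f x = b` has at most two solutions `x`. -/
def IsAPN {F : Type*} [Field F] (f : F → F) : Prop :=
  ∀ a : F, a ≠ 0 → ∀ b : F, {x : F | f (x + a) + f x = b}.ncard ≤ 2

/-- `L` is an affine permutation: it is bijective and `x ↦ L x - L 0` is additive
(over a field of characteristic 2, additive maps are exactly the `𝔽₂`-linear ones). -/
def IsAffinePerm {F : Type*} [Field F] (L : F → F) : Prop :=
  Function.Bijective L ∧ ∀ x y : F, L (x + y) + L 0 = L x + L y

/-- `f` and `g` are affine equivalent: `g = L₁ ∘ f ∘ L₂` for affine permutations `L₁, L₂`. -/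
def AffEquiv {F : Type*} [Field F] (f g : F → F) : Prop :=
  ∃ L₁ L₂ : F → F, IsAffinePerm L₁ ∧ IsAffinePerm L₂ ∧ ∀ x : F, g x = L₁ (f (L₂ x))

/-! With `y = x^q`, `f = y³ + a₁y²x + a₂yx² + a₃x³` and `f^q = x³ + a₁x²y + a₂^q xy² + a₃^q y³`,
so in characteristic two the combination `a₁ f + a₂ f^q` has no `yx²` term. The `𝔽₂`-linear map
`z ↦ a₁ z + a₂ z^q` is a bijection because `a₁/a₂ ∉ U`, and the `y³` coefficient `a₁ + a₂ a₃^q`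
is nonzero because `a₁/a₂ ≠ a₃^q`; dividing by it leaves `y³ + b² y²x + c x³`. Substituting
`x ↦ x / b` turns the middle coefficient into the norm `b^{q+1} ∈ 𝔽_q`. -/

open Function

section

variable {F : Type*} [Field F]

theorem IsAffinePerm.id : IsAffinePerm (id : F → F) :=
  ⟨bijective_id, fun _ _ => by simp⟩

theorem IsAffinePerm.comp {L M : F → F} (hL : IsAffinePerm L) (hM : IsAffinePerm M) :
    IsAffinePerm (L ∘ M) := by
  refine ⟨hL.1.comp hM.1, fun x y => ?_⟩
  have hxy : M x + M y = M (x + y) + M 0 := (hM.2 x y).symm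
  have h₁ := hL.2 (M x) (M y)
  have h₂ := hL.2 (M (x + y)) (M 0)
  simp only [comp_apply]
  rw [hxy] at h₁
  linear_combination h₁ - h₂

theorem isAffinePerm_mul_left {c : F} (hc : c ≠ 0) : IsAffinePerm (c * ·) :=
  ⟨(Equiv.mulLeft₀ c hc).bijective, fun x y => by ring⟩

theorem isAffinePerm_of_injective_of_map_add [Finite F] {L : F → F} (hinj : Injective L)
    (hadd : ∀ x y, L (x + y) = L x + L y) : IsAffinePerm L := by
  have hL0 : L 0 = 0 := by simpa using hadd 0 0
  exact ⟨hinj.bijective_of_finite, fun x y => by rw [hadd, hL0, add_zero]⟩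

theorem AffEquiv.trans {f g h : F → F} (hfg : AffEquiv f g) (hgh : AffEquiv g h) :
    AffEquiv f h := by
  obtain ⟨L₁, L₂, hL₁, hL₂, hg⟩ := hfg
  obtain ⟨M₁, M₂, hM₁, hM₂, hh⟩ := hgh
  exact ⟨M₁ ∘ L₁, L₂ ∘ M₂, hM₁.comp hL₁, hL₂.comp hM₂, fun x => by simp [hh, hg]⟩

def kimPoly (m : ℕ) (b₁ b₂ b₃ : F) (x : F) : F :=
  x ^ (3 * 2 ^ m) + b₁ * x ^ (2 * 2 ^ m + 1) + b₂ * x ^ (2 ^ m + 2) + b₃ * x ^ 3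

variable {m : ℕ}

theorem kimPoly_eq (b₁ b₂ b₃ x : F) :
    kimPoly m b₁ b₂ b₃ x = (x ^ 2 ^ m) ^ 3 + b₁ * (x ^ 2 ^ m) ^ 2 * x
      + b₂ * x ^ 2 ^ m * x ^ 2 + b₃ * x ^ 3 := by
  simp only [kimPoly, pow_add, pow_mul']
  ring

theorem affEquiv_kimPoly_scale {l : F} (hl : l ≠ 0) (b₁ b₂ b₃ : F) :
    AffEquiv (kimPoly m b₁ b₂ b₃) (kimPoly m (b₁ * l / l ^ 2 ^ m)
      (b₂ * l ^ 2 / (l ^ 2 ^ m) ^ 2) (b₃ * l ^ 3 / (l ^ 2 ^ m) ^ 3)) := by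
  have hlq : l ^ 2 ^ m ≠ 0 := pow_ne_zero _ hl
  refine ⟨(((l ^ 2 ^ m) ^ 3)⁻¹ * ·), (l * ·), isAffinePerm_mul_left (by positivity),
    isAffinePerm_mul_left hl, fun x => ?_⟩
  simp only [kimPoly_eq, mul_pow]
  field_simp

theorem pow_div_self_pow_succ_eq_one {q : ℕ} {w : F} (hw : w ≠ 0) (hinv : (w ^ q) ^ q = w) :
    (w ^ q / w) ^ (q + 1) = 1 := by
  rw [div_pow, ← pow_mul, mul_add, mul_one, pow_add, pow_mul, hinv, pow_succ']
  exact div_self (by positivity)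

section CharTwo

variable [CharP F 2]

theorem injective_mul_add_mul_pow (hinv : ∀ z : F, (z ^ 2 ^ m) ^ 2 ^ m = z) {a b : F}
    (hb : b ≠ 0) (hab : (a / b) ^ (2 ^ m + 1) ≠ 1) :
    Injective fun z : F => a * z + b * z ^ 2 ^ m := by
  intro u v huv
  by_contra hne
  have hw : u - v ≠ 0 := sub_ne_zero.mpr hne
  have hker : a * (u - v) = b * (u - v) ^ 2 ^ m := by
    rw [sub_pow_char_pow]
    linear_combination huv - (b * (u ^ 2 ^ m - v ^ 2 ^ m)) * (CharTwo.two_eq_zero : (2 : F) = 0)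
  refine hab ?_
  rw [show a / b = (u - v) ^ 2 ^ m / (u - v) by rw [div_eq_div_iff hb hw]; linear_combination hker]
  exact pow_div_self_pow_succ_eq_one hw (hinv _)

theorem exists_ne_zero_mul_div_pow_fixed [Finite F] (hinv : ∀ z : F, (z ^ 2 ^ m) ^ 2 ^ m = z)
    (a : F) : ∃ l : F, l ≠ 0 ∧ (a * l / l ^ 2 ^ m) ^ 2 ^ m = a * l / l ^ 2 ^ m := by
  obtain ⟨b, rfl⟩ := isSquare_of_charTwo' a
  rcases eq_or_ne b 0 with rfl | hb
  · exact ⟨1, one_ne_zero, by simp⟩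
  refine ⟨b⁻¹, inv_ne_zero hb, ?_⟩
  have hnorm : b * b * b⁻¹ / b⁻¹ ^ 2 ^ m = b * b ^ 2 ^ m := by
    rw [inv_pow]
    field_simp
  rw [hnorm, mul_pow, hinv, mul_comm]

theorem kimPoly_pow (hinv : ∀ z : F, (z ^ 2 ^ m) ^ 2 ^ m = z) (b₁ b₂ b₃ x : F) :
    kimPoly m b₁ b₂ b₃ x ^ 2 ^ m = x ^ 3 + b₁ ^ 2 ^ m * x ^ 2 * x ^ 2 ^ m
      + b₂ ^ 2 ^ m * x * (x ^ 2 ^ m) ^ 2 + b₃ ^ 2 ^ m * (x ^ 2 ^ m) ^ 3 := by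
  simp only [kimPoly_eq, add_pow_char_pow, mul_pow, ← pow_mul, mul_comm _ (2 ^ m)]
  simp only [pow_mul, hinv]

theorem affEquiv_kimPoly_eliminate [Finite F] (hinv : ∀ z : F, (z ^ 2 ^ m) ^ 2 ^ m = z)
    {a₁ a₂ a₃ : F} (ha₁ : a₁ ^ 2 ^ m = a₁) (ha₂ : a₂ ≠ 0)
    (hU : (a₁ / a₂) ^ (2 ^ m + 1) ≠ 1) (hne : a₁ / a₂ ≠ a₃ ^ 2 ^ m) :
    AffEquiv (kimPoly m a₁ a₂ a₃) (kimPoly m ((a₁ ^ 2 + a₂ ^ (2 ^ m + 1)) / (a₁ + a₂ * a₃ ^ 2 ^ m))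
      0 ((a₁ * a₃ + a₂) / (a₁ + a₂ * a₃ ^ 2 ^ m))) := by
  set c := a₁ + a₂ * a₃ ^ 2 ^ m
  have hc : c ≠ 0 := fun h => hne <| by
    rw [div_eq_iff ha₂]
    linear_combination h - (a₂ * a₃ ^ 2 ^ m) * (CharTwo.two_eq_zero : (2 : F) = 0)
  have hL : IsAffinePerm fun z : F => c⁻¹ * (a₁ * z + a₂ * z ^ 2 ^ m) := by
    refine isAffinePerm_of_injective_of_map_add
      ((mul_right_injective₀ (inv_ne_zero hc)).comp (injective_mul_add_mul_pow hinv ha₂ hU))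
      fun x y => ?_
    rw [add_pow_char_pow]
    ring
  refine ⟨_, id, hL, IsAffinePerm.id, fun x => ?_⟩
  simp only [id, kimPoly_pow hinv, ha₁]
  simp only [kimPoly_eq]
  field_simp
  linear_combination (-(a₁ * a₂ * x ^ 2 ^ m * x ^ 2)) * (CharTwo.two_eq_zero : (2 : F) = 0)

end CharTwo

end

theorem kim_type_eliminate_a2_general
    (m : ℕ) (F : Type*) [Field F] [Fintype F]
    (hcard : Fintype.card F = 2 ^ (2 * m))
    (a₁ a₂ a₃ : F) (ha₁ : a₁ ^ (2 ^ m) = a₁) (ha₂ : a₂ ≠ 0)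
    (hU : (a₁ / a₂) ^ (2 ^ m + 1) ≠ 1)
    (hne : a₁ / a₂ ≠ a₃ ^ (2 ^ m))
    (f : F → F)
    (hf : ∀ x : F, f x = x ^ (3 * 2 ^ m) + a₁ * x ^ (2 * 2 ^ m + 1)
        + a₂ * x ^ (2 ^ m + 2) + a₃ * x ^ 3) :
    ∃ a₁' a₃' : F, a₁' ^ (2 ^ m) = a₁' ∧
      AffEquiv f (fun x : F => x ^ (3 * 2 ^ m) + a₁' * x ^ (2 * 2 ^ m + 1) + a₃' * x ^ 3) := by
  have : CharP F 2 := charP_of_card_eq_prime_pow hcard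
  have hinv : ∀ z : F, (z ^ 2 ^ m) ^ 2 ^ m = z := fun z => by
    rw [← pow_mul, ← pow_add, ← two_mul, ← hcard, FiniteField.pow_card]
  obtain ⟨l, hl, hfix⟩ := exists_ne_zero_mul_div_pow_fixed hinv
    ((a₁ ^ 2 + a₂ ^ (2 ^ m + 1)) / (a₁ + a₂ * a₃ ^ 2 ^ m))
  refine ⟨_, (a₁ * a₃ + a₂) / (a₁ + a₂ * a₃ ^ 2 ^ m) * l ^ 3 / (l ^ 2 ^ m) ^ 3, hfix, ?_⟩
  rw [show f = kimPoly m a₁ a₂ a₃ from funext hf]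
  convert (affEquiv_kimPoly_eliminate hinv ha₁ ha₂ hU hne).trans
    (affEquiv_kimPoly_scale hl _ 0 _) using 1
  ext x
  simp [kimPoly]

/-- If `a₁/a₂ ∉ U` and `a₁/a₂ ≠ a₃^q`, then the Kim-type function `f` is affine equivalent to
a function `h(x) = x^{3q} + a₁'x^{2q+1} + a₃'x³` with `a₁' ∈ 𝔽_q`. Here `q = 2^m`,
`U = {z : z^(q+1) = 1}`, and membership in `𝔽_q` is expressed via `a ^ (2^m) = a`. -/
theorem kim_type_eliminate_a2
    (m : ℕ) (hm : 0 < m) (F : Type*) [Field F] [Fintype F]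
    (hcard : Fintype.card F = 2 ^ (2 * m))
    (a₁ a₂ a₃ : F) (ha₁ : a₁ ^ (2 ^ m) = a₁) (ha₂ : a₂ ≠ 0)
    (hU : (a₁ / a₂) ^ (2 ^ m + 1) ≠ 1)
    (hne : a₁ / a₂ ≠ a₃ ^ (2 ^ m))
    (f : F → F)
    (hf : ∀ x : F, f x = x ^ (3 * 2 ^ m) + a₁ * x ^ (2 * 2 ^ m + 1)
        + a₂ * x ^ (2 ^ m + 2) + a₃ * x ^ 3) :
    ∃ a₁' a₃' : F, a₁' ^ (2 ^ m) = a₁' ∧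
      AffEquiv f (fun x : F => x ^ (3 * 2 ^ m) + a₁' * x ^ (2 * 2 ^ m + 1) + a₃' * x ^ 3) :=
  kim_type_eliminate_a2_general m F hcard a₁ a₂ a₃ ha₁ ha₂ hU hne f hf
end

section
/- Let m ≥ 4 and q = 2^m. Let f : F_{q²} → F_{q²} be given by f(x) = x^{3q} + a₁x^{2q+1} + a₃x³ where a₁ ∈ F_q and a₃ ∈ F_{q²}. If (a₁, 0, a₃) ∈ Γ₁, then f is affine equivalent to G₁(x) = x³ or f is affine equivalent to G₂(x) = x^{2^{m-1}+1}. -/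
/-!
Over `𝔽_{q²}` write `z̄ = z^q`. With `a₂ = 0` and `a₁ ∈ 𝔽_q` the cubic condition of `Γ₁` reads
`a₁² (θ₁² + θ₁ + a₁ (a₃ + ā₃)) = 0`.

* If `a₁ = 0`, then `f = L ∘ x³` for the additive map `L t = a₃ t + t̄`, which is invertible
  because `θ₁ = 1 + a₃ ā₃ ≠ 0`.
* If `a₁ ≠ 0` and `a₃ ∈ 𝔽_q`, then `θ₁ = 1`, hence `a₃ = a₁` and `Tr_m(a₁²) = 0`. Artin–Schreier
  gives `c ∈ 𝔽_q` with `a₁ (1 + c)² = c`, and then `f(x + c x̄) = (c³ + c) x³ + (1 + c²) x̄³`,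
  so `f` is affine equivalent to `x³`.
* If `a₁ ≠ 0` and `a₃ ∉ 𝔽_q`, let `s = a₃ + ā₃` and `α = (θ₁ + 1)/s`, both in `𝔽_q`. Then
  `a₁ = α θ₁`, and `a₃ ā₃ / s² = α⁴ + (α/s)² + α/s`. The left side is `w² + w` for `w = a₃/s`,
  and `w̄ + w = 1`, so its trace is `1`; the right side has trace `Tr_m(α)⁴`. Hence
  `Tr_m(a₁²/θ₁²) = Tr_m(α)² ≠ 0`, contradicting `Γ₁`.
-/

open Finset Function

section AffineEquivalence

variable {F : Type*} [Field F]

lemma isAffinePerm_addEquiv (e : F ≃+ F) : IsAffinePerm e :=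
  ⟨e.bijective, fun x y => by rw [map_add, map_zero, add_zero]⟩

lemma affEquiv_of_comp_eq [Finite F] {f g : F → F} (L M : F →+ F) (hL : Injective L)
    (hM : Injective M) (h : ∀ x, f (M x) = L (g x)) : AffEquiv f g := by
  let eL := AddEquiv.ofBijective L ⟨hL, Finite.surjective_of_injective hL⟩
  let eM := AddEquiv.ofBijective M ⟨hM, Finite.surjective_of_injective hM⟩
  refine ⟨eL.symm, eM, isAffinePerm_addEquiv _, isAffinePerm_addEquiv _, fun x => ?_⟩
  rw [eL.eq_symm_apply]
  exact (h x).symm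

end AffineEquivalence

section CharTwo

variable {F : Type*} [Field F] [CharP F 2]

def absTrace (n : ℕ) : F →+ F :=
  AddMonoidHom.mk' (fun z => ∑ i ∈ range n, z ^ 2 ^ i) fun x y => by
    simp only [add_pow_char_pow, sum_add_distrib]

lemma absTrace_apply (n : ℕ) (z : F) : absTrace n z = ∑ i ∈ range n, z ^ 2 ^ i := rfl

lemma absTrace_sq (n : ℕ) (z : F) : absTrace n (z ^ 2) = absTrace n z ^ 2 := by
  simp only [absTrace_apply, CharTwo.sum_sq, pow_right_comm z 2]

lemma absTrace_sq_add_self (n : ℕ) (z : F) : absTrace n (z ^ 2 + z) = z ^ 2 ^ n + z := by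
  induction n with
  | zero => simp [absTrace_apply, CharTwo.add_self_eq_zero]
  | succ n ih =>
    rw [absTrace_apply, sum_range_succ, ← absTrace_apply, ih, add_pow_char_pow, ← pow_mul,
      ← pow_succ']
    linear_combination z ^ 2 ^ n * CharTwo.two_eq_zero (R := F)

lemma absTrace_add_range (m n : ℕ) (z : F) :
    absTrace (m + n) z = absTrace m z + absTrace n (z ^ 2 ^ m) := by
  simp only [absTrace_apply, sum_range_add, pow_add, pow_mul]

variable (F) in
def artinSchreier : F →+ F :=
  AddMonoidHom.mk' (fun u => u ^ 2 + u) fun x y => by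
    simp only [CharTwo.add_sq]
    ring

lemma artinSchreier_apply (u : F) : artinSchreier F u = u ^ 2 + u := rfl

lemma natCard_ker_artinSchreier_le : Nat.card (artinSchreier F).ker ≤ 2 := by
  have hsub : ((artinSchreier F).ker : Set F) ⊆ {0, 1} := by
    intro u hu
    have hu : u * (u + 1) = 0 := by
      rw [SetLike.mem_coe, AddMonoidHom.mem_ker, artinSchreier_apply] at hu
      linear_combination hu
    rcases mul_eq_zero.mp hu with h | h
    · exact Or.inl h
    · exact Or.inr (CharTwo.add_eq_zero.mp h)
  rw [← SetLike.coe_sort_coe, Nat.card_coe_set_eq]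
  exact (Set.ncard_le_ncard hsub).trans (Set.ncard_pair zero_ne_one).le

lemma natCard_ker_absTrace_le {n : ℕ} (hn : n ≠ 0) :
    Nat.card (absTrace (F := F) n).ker ≤ 2 ^ (n - 1) := by
  let p : Polynomial F := ∑ i ∈ range n, Polynomial.X ^ 2 ^ i
  have hcoeff : p.coeff 1 = 1 := by
    rw [Polynomial.finsetSum_coeff, sum_eq_single 0]
    · simp
    · intro i _ hi
      rw [Polynomial.coeff_X_pow, if_neg]
      exact fun h => hi (Nat.pow_right_injective le_rfl (h.symm.trans (pow_zero 2).symm))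
    · simp [Nat.pos_of_ne_zero hn]
  have hp : p ≠ 0 := fun h => by simp [h] at hcoeff
  have hdeg : p.natDegree ≤ 2 ^ (n - 1) := by
    refine Polynomial.natDegree_sum_le_of_forall_le _ _ fun i hi => ?_
    rw [Polynomial.natDegree_X_pow]
    exact Nat.pow_le_pow_right two_pos (Nat.le_sub_one_of_lt (mem_range.mp hi))
  have hsub : ((absTrace (F := F) n).ker : Set F) ⊆ p.rootSet F := by
    intro z hz
    rw [SetLike.mem_coe, AddMonoidHom.mem_ker, absTrace_apply] at hz
    rw [Polynomial.mem_rootSet, Polynomial.aeval_def, Polynomial.eval₂_finsetSum]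
    simpa [p] using ⟨hp, hz⟩
  rw [← SetLike.coe_sort_coe, Nat.card_coe_set_eq]
  exact (Set.ncard_le_ncard hsub (Set.toFinite _)).trans ((p.ncard_rootSet_le F).trans hdeg)

lemma absTrace_artinSchreier [Fintype F] {n : ℕ} (hcard : Fintype.card F = 2 ^ n) (u : F) :
    absTrace n (artinSchreier F u) = 0 := by
  rw [artinSchreier_apply, absTrace_sq_add_self, ← hcard, FiniteField.pow_card,
    CharTwo.add_self_eq_zero]

lemma exists_sq_add_self_eq [Fintype F] {n : ℕ} (hcard : Fintype.card F = 2 ^ n) {z : F}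
    (hz : absTrace n z = 0) : ∃ u, u ^ 2 + u = z := by
  have hn : n ≠ 0 := by
    rintro rfl
    exact (Fintype.one_lt_card (α := F)).ne' (by simpa using hcard)
  let P := (artinSchreier F).codRestrict (absTrace n).ker
    fun u => AddMonoidHom.mem_ker.mpr (absTrace_artinSchreier hcard u)
  have hP : Surjective P := by
    refine AddMonoidHom.surjective_of_card_ker_le_div P ?_
    rw [AddMonoidHom.ker_codRestrict, Nat.card_eq_fintype_card (α := F), hcard]
    calc Nat.card (artinSchreier F).ker ≤ 2 := natCard_ker_artinSchreier_le
      _ = 2 ^ n / 2 ^ (n - 1) := by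
        rw [Nat.pow_div (Nat.sub_le n 1) two_pos, Nat.sub_sub_self (Nat.one_le_iff_ne_zero.mpr hn),
          pow_one]
      _ ≤ 2 ^ n / Nat.card (absTrace (F := F) n).ker :=
        Nat.div_le_div_left (natCard_ker_absTrace_le hn) Nat.card_pos
  obtain ⟨u, hu⟩ := hP ⟨z, hz⟩
  exact ⟨u, congrArg Subtype.val hu⟩

lemma exists_sq_add_self_eq_of_pow_eq_self [Fintype F] {m : ℕ}
    (hcard : Fintype.card F = 2 ^ (2 * m)) {z : F} (hz : z ^ 2 ^ m = z)
    (htr : absTrace m z = 0) : ∃ u, u ^ 2 ^ m = u ∧ u ^ 2 + u = z := by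
  obtain ⟨u, hu⟩ :=
    exists_sq_add_self_eq hcard (by rw [two_mul, absTrace_add_range, hz, htr, add_zero])
  refine ⟨u, ?_, hu⟩
  have h := absTrace_sq_add_self m u
  rw [hu, htr] at h
  exact CharTwo.add_eq_zero.mp h.symm

end CharTwo

section Conjugation

variable {F : Type*} [Field F] {m : ℕ}

lemma pow_two_pow_pow_two_pow [Fintype F] (hcard : Fintype.card F = 2 ^ (2 * m)) (z : F) :
    (z ^ 2 ^ m) ^ 2 ^ m = z := by
  rw [← pow_mul, ← pow_add, ← two_mul, ← hcard, FiniteField.pow_card]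

variable [CharP F 2]

def linBinom (m : ℕ) (A B : F) : F →+ F :=
  AddMonoidHom.mk' (fun t => A * t + B * t ^ 2 ^ m) fun x y => by
    rw [add_pow_char_pow]
    ring

lemma linBinom_apply (A B t : F) : linBinom m A B t = A * t + B * t ^ 2 ^ m := rfl

lemma linBinom_injective (hq : ∀ z : F, (z ^ 2 ^ m) ^ 2 ^ m = z) {A B : F}
    (hAB : A * A ^ 2 ^ m ≠ B * B ^ 2 ^ m) : Injective (linBinom m A B) := by
  refine (injective_iff_map_eq_zero _).mpr fun t ht => ?_
  by_contra ht0
  have h1 : A * t = B * t ^ 2 ^ m := CharTwo.add_eq_zero.mp ht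
  have h2 : A ^ 2 ^ m * t ^ 2 ^ m = B ^ 2 ^ m * t := by
    rw [← mul_pow, h1, mul_pow, hq]
  apply hAB
  apply mul_right_cancel₀ (mul_ne_zero ht0 (pow_ne_zero (2 ^ m) ht0))
  linear_combination A ^ 2 ^ m * t ^ 2 ^ m * h1 + B * t ^ 2 ^ m * h2

lemma linBinom_injective_of_pow_eq_self (hq : ∀ z : F, (z ^ 2 ^ m) ^ 2 ^ m = z) {A B : F}
    (hA : A ^ 2 ^ m = A) (hB : B ^ 2 ^ m = B) (hAB : A ≠ B) : Injective (linBinom m A B) :=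
  linBinom_injective hq fun h => hAB <| CharTwo.sq_inj.mp <| by rwa [hA, hB, ← sq, ← sq] at h

lemma absTrace_mul_pow_div_sq (hq : ∀ z : F, (z ^ 2 ^ m) ^ 2 ^ m = z) {a : F}
    (hs : a ^ 2 ^ m + a ≠ 0) : absTrace m (a * a ^ 2 ^ m / (a ^ 2 ^ m + a) ^ 2) = 1 := by
  have hsq : (a ^ 2 ^ m + a) ^ 2 ^ m = a ^ 2 ^ m + a := by rw [add_pow_char_pow, hq, add_comm]
  have hw : (a / (a ^ 2 ^ m + a)) ^ 2 + a / (a ^ 2 ^ m + a)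
      = a * a ^ 2 ^ m / (a ^ 2 ^ m + a) ^ 2 := by
    field_simp
    linear_combination a ^ 2 * CharTwo.two_eq_zero (R := F)
  rw [← hw, absTrace_sq_add_self, div_pow, hsq, ← add_div, div_self hs]

end Conjugation

section KimFunction

variable {F : Type*} [Field F]

def kimFun (m : ℕ) (a₁ a₃ x : F) : F :=
  x ^ (3 * 2 ^ m) + a₁ * x ^ (2 * 2 ^ m + 1) + a₃ * x ^ 3

lemma kimFun_eq (m : ℕ) (a₁ a₃ x : F) :
    kimFun m a₁ a₃ x = (x ^ 2 ^ m) ^ 3 + a₁ * ((x ^ 2 ^ m) ^ 2 * x) + a₃ * x ^ 3 := by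
  rw [kimFun]
  ring

variable [CharP F 2] {m : ℕ}

lemma affEquiv_kimFun_zero [Finite F] (hq : ∀ z : F, (z ^ 2 ^ m) ^ 2 ^ m = z) {a₃ : F}
    (h : 1 + a₃ * a₃ ^ 2 ^ m ≠ 0) : AffEquiv (kimFun m 0 a₃) (· ^ 3) := by
  have hL : a₃ * a₃ ^ 2 ^ m ≠ 1 * 1 ^ 2 ^ m := by
    rw [one_pow, mul_one]
    rintro h'
    exact h (by rw [h', CharTwo.add_self_eq_zero])
  refine affEquiv_of_comp_eq (linBinom m a₃ 1) (AddMonoidHom.id F) (linBinom_injective hq hL)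
    injective_id fun x => ?_
  rw [AddMonoidHom.id_apply, kimFun_eq, linBinom_apply, pow_right_comm x 3]
  ring

lemma cubic_form_subst_eq {a c : F} (hc : a * (1 + c) ^ 2 = c) (x y : F) :
    (y + c * x) ^ 3 + a * ((y + c * x) ^ 2 * (x + c * y)) + a * (x + c * y) ^ 3
      = (c ^ 3 + c) * x ^ 3 + (1 + c ^ 2) * y ^ 3 := by
  have hc1 : (1 + c) ^ 2 ≠ 0 := by
    rintro h
    rw [h, mul_zero] at hc
    simp [← hc] at h
  refine mul_left_cancel₀ hc1 ?_
  -- `ring_nf` leaves only even coefficients, which vanish in characteristic 2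
  linear_combination (norm := ring_nf) ((y + c * x) ^ 2 * (x + c * y) + (x + c * y) ^ 3) * hc
  simp [CharTwo.ofNat_eq_mod]

lemma affEquiv_kimFun_self [Finite F] (hq : ∀ z : F, (z ^ 2 ^ m) ^ 2 ^ m = z) {a c : F}
    (hc : a * (1 + c) ^ 2 = c) (hcq : c ^ 2 ^ m = c) : AffEquiv (kimFun m a a) (· ^ 3) := by
  have hc1 : 1 ≠ c := by
    rintro rfl
    simp [CharTwo.add_self_eq_zero] at hc
  have hL : c ^ 3 + c ≠ 1 + c ^ 2 := fun h => by
    have h3 : (1 + c) ^ 3 = 0 := by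
      linear_combination (norm := ring_nf) h
      simp [CharTwo.ofNat_eq_mod]
    exact hc1 (CharTwo.add_eq_zero.mp (pow_eq_zero_iff three_ne_zero |>.mp h3))
  have hfix : ∀ k, (c ^ k) ^ 2 ^ m = c ^ k := fun k => by rw [pow_right_comm, hcq]
  refine affEquiv_of_comp_eq (linBinom m (c ^ 3 + c) (1 + c ^ 2)) (linBinom m 1 c)
    (linBinom_injective_of_pow_eq_self hq ?_ ?_ hL)
    (linBinom_injective_of_pow_eq_self hq (one_pow _) hcq hc1) fun x => ?_
  · rw [add_pow_char_pow, hfix, hcq]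
  · rw [add_pow_char_pow, hfix, one_pow]
  · have hconj : (1 * x + c * x ^ 2 ^ m) ^ 2 ^ m = x ^ 2 ^ m + c * x := by
      rw [add_pow_char_pow, mul_pow, mul_pow, hcq, hq, one_pow, one_mul]
    rw [kimFun_eq, linBinom_apply, linBinom_apply, hconj, one_mul, pow_right_comm x 3,
      cubic_form_subst_eq hc]

lemma exists_mul_one_add_sq_eq [Fintype F] (hcard : Fintype.card F = 2 ^ (2 * m)) {a : F}
    (ha : a ≠ 0) (haq : a ^ 2 ^ m = a) (htr : absTrace m (a ^ 2) = 0) :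
    ∃ c, a * (1 + c) ^ 2 = c ∧ c ^ 2 ^ m = c := by
  obtain ⟨u, huq, hu⟩ :=
    exists_sq_add_self_eq_of_pow_eq_self hcard (by rw [pow_right_comm, haq]) htr
  refine ⟨u / a, ?_, by rw [div_pow, huq, haq]⟩
  field_simp
  linear_combination (norm := ring_nf) -hu
  simp [CharTwo.ofNat_eq_mod]

end KimFunction

section Gamma1

variable {F : Type*} [Field F] [CharP F 2] {m : ℕ}

lemma absTrace_mul_self_div_sq_ne_zero (hq : ∀ z : F, (z ^ 2 ^ m) ^ 2 ^ m = z) {a₁ a₃ θ : F}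
    (ha₁ : a₁ ^ 2 ^ m = a₁) (hs : a₃ ^ 2 ^ m + a₃ ≠ 0) (hθ0 : θ ≠ 0)
    (hθ : θ = 1 + a₁ ^ 2 + a₃ * a₃ ^ 2 ^ m) (hK : θ ^ 2 + θ = a₁ * (a₃ ^ 2 ^ m + a₃)) :
    absTrace m (a₁ * a₁ / θ ^ 2) ≠ 0 := by
  set s := a₃ ^ 2 ^ m + a₃
  have hsq : s ^ 2 ^ m = s := by rw [add_pow_char_pow, hq, add_comm]
  have hθq : θ ^ 2 ^ m = θ := by
    rw [hθ, add_pow_char_pow, add_pow_char_pow, one_pow, mul_pow, hq, pow_right_comm, ha₁,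
      mul_comm a₃]
  obtain ⟨α, hα_def⟩ : ∃ α, α = (θ + 1) / s := ⟨_, rfl⟩
  have hα : α * s = θ + 1 := by rw [hα_def, div_mul_cancel₀ _ hs]
  have hαq : α ^ 2 ^ m = α := by rw [hα_def, div_pow, add_pow_char_pow, hθq, one_pow, hsq]
  have ha₁α : a₁ = α * θ := by
    refine mul_right_cancel₀ hs ?_
    linear_combination -hK + θ * hα + (θ ^ 2 + θ - α * θ * s) * CharTwo.two_eq_zero (R := F)
  have hdecomp : a₃ * a₃ ^ 2 ^ m / s ^ 2 = ((α / s) ^ 2 + α / s) + (α ^ 2) ^ 2 := by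
    field_simp
    linear_combination (norm := ring_nf)
      -hθ - (a₁ + α * θ) * ha₁α + (α ^ 2 * (θ + α * s - 1) - 1) * hα
    simp [CharTwo.ofNat_eq_mod]
  have h1 := absTrace_mul_pow_div_sq hq hs
  rw [hdecomp, map_add, absTrace_sq_add_self, div_pow, hαq, hsq, CharTwo.add_self_eq_zero,
    zero_add, absTrace_sq, absTrace_sq] at h1
  have hα2 : a₁ * a₁ / θ ^ 2 = α ^ 2 := by
    rw [ha₁α]
    field_simp
  rw [hα2, absTrace_sq]
  intro h0
  simp [h0] at h1

lemma affEquiv_kimFun_of_sq_add_self_eq [Fintype F] (hcard : Fintype.card F = 2 ^ (2 * m))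
    {a₁ a₃ θ : F} (ha : a₁ ≠ 0) (ha₁ : a₁ ^ 2 ^ m = a₁) (hθ0 : θ ≠ 0)
    (hθ : θ = 1 + a₁ ^ 2 + a₃ * a₃ ^ 2 ^ m) (htr : absTrace m (a₁ * a₁ / θ ^ 2) = 0)
    (hK : θ ^ 2 + θ = a₁ * (a₃ ^ 2 ^ m + a₃)) : AffEquiv (kimFun m a₁ a₃) (· ^ 3) := by
  have hq := pow_two_pow_pow_two_pow hcard
  have hs : a₃ ^ 2 ^ m + a₃ = 0 := by
    by_contra hs
    exact absTrace_mul_self_div_sq_ne_zero hq ha₁ hs hθ0 hθ hK htr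
  have ha₃ : a₃ ^ 2 ^ m = a₃ := CharTwo.add_eq_zero.mp hs
  have hθ1 : θ = 1 := by
    rw [hs, mul_zero, sq, ← mul_add_one, mul_eq_zero] at hK
    exact CharTwo.add_eq_zero.mp (hK.resolve_left hθ0)
  obtain rfl : a₃ = a₁ := by
    refine (CharTwo.sq_inj.mp ?_).symm
    linear_combination hθ.symm.trans hθ1 - a₃ * ha₃ - a₃ ^ 2 * CharTwo.two_eq_zero (R := F)
  rw [hθ1, one_pow, div_one, ← sq] at htr
  obtain ⟨c, hc, hcq⟩ := exists_mul_one_add_sq_eq hcard ha ha₁ htr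
  exact affEquiv_kimFun_self hq hc hcq

end Gamma1

theorem kim_type_Gamma1_equiv_Gold_general
    (m : ℕ) (F : Type*) [Field F] [Fintype F]
    (hcard : Fintype.card F = 2 ^ (2 * m))
    (a₁ a₂ a₃ : F) (ha₁ : a₁ ^ (2 ^ m) = a₁) (ha₂ : a₂ = 0)
    (f : F → F)
    (hf : ∀ x : F, f x = x ^ (3 * 2 ^ m) + a₁ * x ^ (2 * 2 ^ m + 1) + a₃ * x ^ 3)
    (θ₁ θ₂ θ₃ θ₄ : F)
    (hθ₁ : θ₁ = 1 + a₁ ^ 2 + a₂ * a₂ ^ (2 ^ m) + a₃ * a₃ ^ (2 ^ m))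
    (hθ₂ : θ₂ = a₁ + a₂ ^ (2 ^ m) * a₃)
    (hθ₃ : θ₃ = a₂ ^ (2 ^ m) + a₁ * a₃ ^ (2 ^ m))
    (hθ₄ : θ₄ = a₁ ^ 2 + a₂ * a₂ ^ (2 ^ m))
    (hΓ₁ : θ₁ ≠ 0 ∧ (∑ i ∈ Finset.range m, (θ₂ * θ₂ ^ (2 ^ m) / θ₁ ^ 2) ^ 2 ^ i) = 0 ∧
        θ₁ ^ 2 * θ₄ + θ₁ * θ₂ * θ₂ ^ (2 ^ m) + θ₂ ^ 2 * θ₃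
          + (θ₂ ^ (2 ^ m)) ^ 2 * θ₃ ^ (2 ^ m) = 0) :
    AffEquiv f (fun x : F => x ^ 3) ∨ AffEquiv f (fun x : F => x ^ (2 ^ (m - 1) + 1)) := by
  have : CharP F 2 := charP_of_card_eq_prime_pow hcard
  obtain rfl : f = kimFun m a₁ a₃ := funext hf
  subst ha₂ hθ₁ hθ₂ hθ₃ hθ₄
  obtain ⟨hθ, htr, hcubic⟩ := hΓ₁
  simp only [zero_pow (pow_ne_zero m two_ne_zero), mul_zero, zero_mul, add_zero,
    zero_add] at hθ htr hcubic
  rw [← absTrace_apply, ha₁] at htr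
  left
  rcases eq_or_ne a₁ 0 with rfl | ha
  · exact affEquiv_kimFun_zero (pow_two_pow_pow_two_pow hcard) (by simpa using hθ)
  refine affEquiv_kimFun_of_sq_add_self_eq hcard ha ha₁ hθ rfl htr ?_
  rw [ha₁, mul_pow, ha₁, pow_two_pow_pow_two_pow hcard] at hcubic
  refine mul_left_cancel₀ (pow_ne_zero 2 ha) ?_
  linear_combination hcubic - a₁ ^ 3 * (a₃ ^ 2 ^ m + a₃) * CharTwo.two_eq_zero (R := F)

/-- If `(a₁, 0, a₃) ∈ Γ₁`, then `f(x) = x^{3q} + a₁x^{2q+1} + a₃x³` is affine equivalent to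
`G₁(x) = x³` or to `G₂(x) = x^{2^{m-1}+1}`. Here `q = 2^m`, `m ≥ 4`, `z̄ = z^q`,
`Tr_m` is realized as `x ↦ ∑ i < m, x^(2^i)`, and `a₁ ∈ 𝔽_q` is expressed as `a₁^(2^m) = a₁`. -/
theorem kim_type_Gamma1_equiv_Gold
    (m : ℕ) (hm : 4 ≤ m) (F : Type*) [Field F] [Fintype F]
    (hcard : Fintype.card F = 2 ^ (2 * m))
    (a₁ a₂ a₃ : F) (ha₁ : a₁ ^ (2 ^ m) = a₁) (ha₂ : a₂ = 0)
    (f : F → F)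
    (hf : ∀ x : F, f x = x ^ (3 * 2 ^ m) + a₁ * x ^ (2 * 2 ^ m + 1) + a₃ * x ^ 3)
    (θ₁ θ₂ θ₃ θ₄ : F)
    (hθ₁ : θ₁ = 1 + a₁ ^ 2 + a₂ * a₂ ^ (2 ^ m) + a₃ * a₃ ^ (2 ^ m))
    (hθ₂ : θ₂ = a₁ + a₂ ^ (2 ^ m) * a₃)
    (hθ₃ : θ₃ = a₂ ^ (2 ^ m) + a₁ * a₃ ^ (2 ^ m))
    (hθ₄ : θ₄ = a₁ ^ 2 + a₂ * a₂ ^ (2 ^ m))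
    (hΓ₁ : θ₁ ≠ 0 ∧ (∑ i ∈ Finset.range m, (θ₂ * θ₂ ^ (2 ^ m) / θ₁ ^ 2) ^ 2 ^ i) = 0 ∧
        θ₁ ^ 2 * θ₄ + θ₁ * θ₂ * θ₂ ^ (2 ^ m) + θ₂ ^ 2 * θ₃
          + (θ₂ ^ (2 ^ m)) ^ 2 * θ₃ ^ (2 ^ m) = 0) :
    AffEquiv f (fun x : F => x ^ 3) ∨ AffEquiv f (fun x : F => x ^ (2 ^ (m - 1) + 1)) :=
  kim_type_Gamma1_equiv_Gold_general m F hcard a₁ a₂ a₃ ha₁ ha₂ f hf θ₁ θ₂ θ₃ θ₄ hθ₁ hθ₂ hθ₃ hθ₄ hΓ₁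
end

section
/- Let m ≥ 4 be even, q = 2^m, and let ω ∈ F_q be a primitive cube root of unity. Then the map L(x) = x^q + ωx is a bijection of F_{q²}, and the function f₂(x) = x^{3q} + x^{q+2} + x³ satisfies L(G₁(L(x))) = (1+ω)·f₂(x) for all x ∈ F_{q²}, where G₁(x) = x³; in particular f₂ is affine equivalent to G₁. -/
/-!
Since `ω ^ q = ω` and `x ^ (q ^ 2) = x`, the map `L x = x ^ q + ω x` satisfies
`L (L x) = (1 + ω ^ 2) x = ω x` in characteristic `2`, so `L` is an additive bijection of `𝔽_{q²}`.
Expanding `L ((L x) ^ 3)` with the same two rules and `ω ^ 2 = ω + 1` gives `(1 + ω) f₂ x`,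
so `f₂ = (1 + ω)⁻¹ L ∘ G₁ ∘ L`, and affine equivalence is symmetric.
-/

open Function

section AffineEquivalence

variable {F : Type*} [Field F]

theorem isAffinePerm_of_bijective_of_map_add {L : F → F} (hbij : Bijective L)
    (hadd : ∀ x y, L (x + y) = L x + L y) : IsAffinePerm L := by
  have hL0 : L 0 = 0 := by simpa using hadd 0 0
  exact ⟨hbij, fun x y => by rw [hadd, hL0, add_zero]⟩

theorem IsAffinePerm.const_mul {L : F → F} (hL : IsAffinePerm L) {c : F} (hc : c ≠ 0) :
    IsAffinePerm fun x => c * L x :=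
  ⟨(Equiv.mulLeft₀ c hc).bijective.comp hL.1, fun x y => by
    simp only [← mul_add, hL.2 x y]⟩

theorem IsAffinePerm.symm {L : F → F} (hL : IsAffinePerm L) :
    IsAffinePerm (Equiv.ofBijective L hL.1).symm := by
  have hadd : ∀ u v, L (u + v) = L u + L v - L 0 := fun u v => eq_sub_of_add_eq (hL.2 u v)
  refine ⟨Equiv.bijective _, fun x y => hL.1.1 ?_⟩
  simp only [hadd, Equiv.ofBijective_apply_symm_apply]
  ring

theorem AffEquiv.symm {f g : F → F} (h : AffEquiv f g) : AffEquiv g f := by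
  obtain ⟨L₁, L₂, h₁, h₂, hg⟩ := h
  refine ⟨_, _, h₁.symm, h₂.symm, fun x => ?_⟩
  rw [hg, Equiv.ofBijective_apply_symm_apply L₂ h₂.1, Equiv.ofBijective_symm_apply_apply]

end AffineEquivalence

theorem FiniteField.charP_two_of_card_eq_two_pow {F : Type*} [Field F] [Fintype F] {n : ℕ}
    (h : Fintype.card F = 2 ^ n) : CharP F 2 := by
  have hn : n ≠ 0 := by
    rintro rfl
    exact (Fintype.one_lt_card (α := F)).ne' h
  refine ringChar.of_eq (FiniteField.even_card_iff_char_two.mpr ?_)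
  rw [h, Nat.pow_mod, Nat.mod_self, zero_pow hn, Nat.zero_mod]

theorem FiniteField.pow_pow_eq_self_of_card_eq_sq {F : Type*} [Field F] [Fintype F] {q : ℕ}
    (h : Fintype.card F = q ^ 2) (a : F) : (a ^ q) ^ q = a := by
  rw [← pow_mul, ← sq, ← h, FiniteField.pow_card]

def twistedFrobenius {R : Type*} [CommRing R] (m : ℕ) (ω x : R) : R :=
  x ^ 2 ^ m + ω * x

section CharTwo

variable {R : Type*} [CommRing R] [CharP R 2] {m : ℕ} {ω : R}

theorem twistedFrobenius_add (x y : R) :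
    twistedFrobenius m ω (x + y) = twistedFrobenius m ω x + twistedFrobenius m ω y := by
  simp only [twistedFrobenius, add_pow_char_pow]
  ring

variable (hq : ∀ a : R, (a ^ 2 ^ m) ^ 2 ^ m = a) (hω : ω ^ 2 ^ m = ω) (hω3 : ω ^ 2 + ω + 1 = 0)
include hq hω

theorem twistedFrobenius_pow_two_pow (x : R) :
    twistedFrobenius m ω x ^ 2 ^ m = x + ω * x ^ 2 ^ m := by
  rw [twistedFrobenius, add_pow_char_pow, mul_pow, hω, hq]

include hω3

theorem twistedFrobenius_twistedFrobenius (x : R) :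
    twistedFrobenius m ω (twistedFrobenius m ω x) = ω * x := by
  rw [twistedFrobenius, twistedFrobenius_pow_two_pow hq hω, twistedFrobenius]
  linear_combination x * hω3 + (ω * x ^ 2 ^ m - ω * x) * CharTwo.two_eq_zero (R := R)

theorem twistedFrobenius_twistedFrobenius_cube (x : R) :
    twistedFrobenius m ω (twistedFrobenius m ω x ^ 3) =
      (1 + ω) * (x ^ (3 * 2 ^ m) + x ^ (2 ^ m + 2) + x ^ 3) := by
  rw [twistedFrobenius, ← pow_mul, mul_comm, pow_mul, twistedFrobenius_pow_two_pow hq hω,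
    twistedFrobenius, pow_mul', pow_add]
  set a := x ^ 2 ^ m
  linear_combination ((ω - 1) * (x ^ 3 * ω + 3 * x ^ 2 * a + a ^ 3)) * hω3 +
    (x ^ 2 * a * (ω + 1) + 3 * ω ^ 2 * x * a ^ 2) * CharTwo.two_eq_zero (R := R)

end CharTwo

theorem ne_zero_of_sq_add_add_one_eq_zero {R : Type*} [Semiring R] [Nontrivial R] {ω : R}
    (hω3 : ω ^ 2 + ω + 1 = 0) : ω ≠ 0 := by
  rintro rfl
  simp at hω3

section Field

variable {F : Type*} [Field F] [CharP F 2]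

theorem one_add_ne_zero_of_sq_add_add_one_eq_zero {ω : F} (hω3 : ω ^ 2 + ω + 1 = 0) :
    1 + ω ≠ 0 := by
  intro h
  have : ω = 1 := by linear_combination h - CharTwo.two_eq_zero (R := F)
  subst this
  exact one_ne_zero (by linear_combination hω3 - CharTwo.two_eq_zero (R := F) : (1 : F) = 0)

theorem twistedFrobenius_bijective [Finite F] {m : ℕ} {ω : F}
    (hq : ∀ a : F, (a ^ 2 ^ m) ^ 2 ^ m = a) (hω : ω ^ 2 ^ m = ω) (hω3 : ω ^ 2 + ω + 1 = 0) :
    Bijective (twistedFrobenius m ω) := by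
  refine Finite.injective_iff_bijective.mp fun x y hxy => ?_
  have := congrArg (twistedFrobenius m ω) hxy
  rwa [twistedFrobenius_twistedFrobenius hq hω hω3, twistedFrobenius_twistedFrobenius hq hω hω3,
    mul_right_inj' (ne_zero_of_sq_add_add_one_eq_zero hω3)] at this

end Field

theorem f2_equiv_G1_general
    (m : ℕ) (F : Type*) [Field F] [Fintype F]
    (hcard : Fintype.card F = 2 ^ (2 * m))
    (ω : F) (hω : ω ^ (2 ^ m) = ω) (hω3 : ω ^ 2 + ω + 1 = 0)
    (L f₂ : F → F)
    (hL : ∀ x : F, L x = x ^ (2 ^ m) + ω * x)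
    (hf₂ : ∀ x : F, f₂ x = x ^ (3 * 2 ^ m) + x ^ (2 ^ m + 2) + x ^ 3) :
    Function.Bijective L ∧
    (∀ x : F, L ((L x) ^ 3) = (1 + ω) * f₂ x) ∧
    AffEquiv f₂ (fun x : F => x ^ 3) := by
  have := FiniteField.charP_two_of_card_eq_two_pow hcard
  have hq := FiniteField.pow_pow_eq_self_of_card_eq_sq (by rw [hcard, pow_mul'])
  obtain rfl : L = twistedFrobenius m ω := funext hL
  have hbij := twistedFrobenius_bijective hq hω hω3
  have hcube : ∀ x, twistedFrobenius m ω (twistedFrobenius m ω x ^ 3) = (1 + ω) * f₂ x :=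
    fun x => by rw [hf₂, twistedFrobenius_twistedFrobenius_cube hq hω hω3]
  have hLaff := isAffinePerm_of_bijective_of_map_add hbij twistedFrobenius_add
  have hc := one_add_ne_zero_of_sq_add_add_one_eq_zero hω3
  refine ⟨hbij, hcube, AffEquiv.symm ⟨_, _, hLaff.const_mul (inv_ne_zero hc), hLaff, fun x => ?_⟩⟩
  rw [hcube, inv_mul_cancel_left₀ hc]

/-- Let `m ≥ 4` be even, `q = 2^m`, and `ω ∈ 𝔽_q` a primitive cube root of unity
(`ω² + ω + 1 = 0`, `ω^(2^m) = ω`). Then `L(x) = x^q + ωx` is a bijection of `𝔽_{q²}`,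
`f₂(x) = x^{3q} + x^{q+2} + x³` satisfies `L(G₁(L(x))) = (1+ω)·f₂(x)` where `G₁(x) = x³`,
and in particular `f₂` is affine equivalent to `G₁`. -/
theorem f2_equiv_G1
    (m : ℕ) (hm : 4 ≤ m) (hmeven : Even m) (F : Type*) [Field F] [Fintype F]
    (hcard : Fintype.card F = 2 ^ (2 * m))
    (ω : F) (hω : ω ^ (2 ^ m) = ω) (hω3 : ω ^ 2 + ω + 1 = 0)
    (L f₂ : F → F)
    (hL : ∀ x : F, L x = x ^ (2 ^ m) + ω * x)
    (hf₂ : ∀ x : F, f₂ x = x ^ (3 * 2 ^ m) + x ^ (2 ^ m + 2) + x ^ 3) :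
    Function.Bijective L ∧
    (∀ x : F, L ((L x) ^ 3) = (1 + ω) * f₂ x) ∧
    AffEquiv f₂ (fun x : F => x ^ 3) :=
  f2_equiv_G1_general m F hcard ω hω hω3 L f₂ hL hf₂
end
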